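/- Let A be a WAP-algebra and let B be a norm-closed subalgebra of A. Then B (with the restricted norm) is a WAP-algebra. -/

import Mathlib

/- Restricting functionals along a multiplicative contraction `φ : E → F` sends `WAP(F)` into
`WAP(E)`: the orbit of `f ∘ φ` is the image, under the weakly continuous restriction map, of part
of the orbit of `f`. Hence `‖φ a‖_WAP ≤ ‖a‖_WAP`, and a lower bound `c ‖φ a‖ ≤ ‖φ a‖_WAP` for
an isometric `φ` transfers to `E`. The inclusion of a subalgebra is such a map. -/

noncomputable section
open Metric Set Function ContinuousLinearMap NormedSpace

section WAPDefs

variable (B : Type*) [NormedAddCommGroup B] [NormedSpace ℂ B]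

/-- The set of weakly almost periodic functionals on a Banach space `B` equipped with a
continuous bilinear multiplication `m`: those `f` in the dual for which the orbit
`{f · a : ‖a‖ ≤ 1}` (where `(f · a)(b) = f (a * b)`) is relatively compact in the weak
topology `σ(B*, B**)` of the dual `B*`. -/
def WAPset (m : B →L[ℂ] B →L[ℂ] B) : Set (StrongDual ℂ B) :=
  {f | IsCompact (closure
    ((fun a => toWeakSpace ℂ (StrongDual ℂ B) (f.comp (m a))) '' closedBall (0 : B) 1))}

/-- The WAP-seminorm `‖a‖_WAP = sup {|f a| : f ∈ WAP(B), ‖f‖ ≤ 1}`. -/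
def wapNorm (m : B →L[ℂ] B →L[ℂ] B) (a : B) : ℝ :=
  sSup {r : ℝ | ∃ f ∈ WAPset B m, ‖f‖ ≤ 1 ∧ r = ‖f a‖}

/-- `B` (with multiplication `m`) is a WAP-algebra when the canonical map into `WAP(B)*`
is bounded below, i.e. `sup {|f a| : f ∈ WAP(B), ‖f‖ ≤ 1} ≥ c ‖a‖` for some `c > 0`. -/
def IsWAPAlgebra (m : B →L[ℂ] B →L[ℂ] B) : Prop :=
  ∃ c > 0, ∀ a : B, c * ‖a‖ ≤ wapNorm B m a

instance (X : Submodule ℂ (StrongDual ℂ B)) : SeminormedAddCommGroup X := inferInstance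

instance (X : Submodule ℂ (StrongDual ℂ B)) : NormedSpace ℂ X := inferInstance

/-- The canonical evaluation map from `B` into the dual of a subspace `X ⊆ B*`. -/
def dualEval (X : Submodule ℂ (StrongDual ℂ B)) (a : B) : StrongDual ℂ X :=
  (inclusionInDoubleDual ℂ B a).comp X.subtypeL

/-- `B` (with multiplication `m`) is a dual Banach algebra with predual `X`: `X` is a
norm-closed subspace of `B*` which is a sub-bimodule for the actions `(f·b)(c) = f (b * c)`
and `(b·f)(c) = f (c * b)`, and the canonical evaluation map `B → X*` is an isometric
isomorphism. -/
structure IsDualBanachAlgebra (m : B →L[ℂ] B →L[ℂ] B)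
    (X : Submodule ℂ (StrongDual ℂ B)) : Prop where
  closed : IsClosed (X : Set (StrongDual ℂ B))
  rmod : ∀ f ∈ X, ∀ b : B, f.comp (m b) ∈ X
  lmod : ∀ f ∈ X, ∀ b : B, f.comp (m.flip b) ∈ X
  isometric : ∀ b : B, ‖dualEval B X b‖ = ‖b‖
  surjective : Function.Surjective (dualEval B X)

end WAPDefs

instance (A : Type*) [NonUnitalNormedRing A] [NormedSpace ℂ A] (S : NonUnitalSubalgebra ℂ A) : NormedSpace ℂ S := SubmoduleClass.toNormedSpace (R := ℂ) S

section Restriction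

variable {E F : Type*} [NormedAddCommGroup E] [NormedSpace ℂ E]
  [NormedAddCommGroup F] [NormedSpace ℂ F]

theorem zero_mem_WAPset (m : E →L[ℂ] E →L[ℂ] E) : (0 : StrongDual ℂ E) ∈ WAPset E m := by
  have horbit : (fun a => toWeakSpace ℂ (StrongDual ℂ E) ((0 : StrongDual ℂ E).comp (m a))) ''
      closedBall (0 : E) 1 = {toWeakSpace ℂ (StrongDual ℂ E) 0} := by
    simp only [zero_comp]
    exact Nonempty.image_const ⟨0, mem_closedBall_self zero_le_one⟩ _
  change IsCompact (closure _)
  rw [horbit, closure_singleton]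
  exact isCompact_singleton

variable {mE : E →L[ℂ] E →L[ℂ] E} {mF : F →L[ℂ] F →L[ℂ] F} {φ : E →L[ℂ] F}

theorem comp_mem_WAPset (hφ : ‖φ‖ ≤ 1) (hmul : ∀ a b, φ (mE a b) = mF (φ a) (φ b))
    {f : StrongDual ℂ F} (hf : f ∈ WAPset F mF) : f.comp φ ∈ WAPset E mE := by
  let restrict : WeakSpace ℂ (StrongDual ℂ F) →L[ℂ] WeakSpace ℂ (StrongDual ℂ E) :=
    WeakSpace.map ((ContinuousLinearMap.compL ℂ E F ℂ).flip φ)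
  refine (hf.image restrict.continuous).closure_of_subset ?_
  rintro - ⟨a, ha, rfl⟩
  have hφa : φ a ∈ closedBall (0 : F) 1 := by
    rw [mem_closedBall_zero_iff] at ha ⊢
    exact (φ.le_of_opNorm_le hφ a).trans (by rwa [one_mul])
  exact ⟨_, subset_closure ⟨φ a, hφa, rfl⟩,
    ContinuousLinearMap.ext fun b => congrArg f (hmul a b).symm⟩

theorem wapNorm_map_le (hφ : ‖φ‖ ≤ 1) (hmul : ∀ a b, φ (mE a b) = mF (φ a) (φ b)) (a : E) :
    wapNorm F mF (φ a) ≤ wapNorm E mE a := by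
  refine csSup_le_csSup ⟨‖a‖, ?_⟩ ⟨0, 0, zero_mem_WAPset mF, by simp, by simp⟩ ?_
  · rintro r ⟨g, -, hg, rfl⟩
    simpa using g.le_opNorm a |>.trans (mul_le_of_le_one_left (norm_nonneg a) hg)
  · rintro r ⟨f, hf, hf1, rfl⟩
    exact ⟨f.comp φ, comp_mem_WAPset hφ hmul hf,
      (opNorm_comp_le f φ).trans (mul_le_one₀ hf1 (norm_nonneg φ) hφ), rfl⟩

theorem IsWAPAlgebra.of_isometry (hF : IsWAPAlgebra F mF) (hφ : ∀ a, ‖φ a‖ = ‖a‖)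
    (hmul : ∀ a b, φ (mE a b) = mF (φ a) (φ b)) : IsWAPAlgebra E mE := by
  obtain ⟨c, hc, hbound⟩ := hF
  have hφ1 : ‖φ‖ ≤ 1 := opNorm_le_bound _ zero_le_one fun a => by rw [hφ, one_mul]
  exact ⟨c, hc, fun a => hφ a ▸ (hbound (φ a)).trans (wapNorm_map_le hφ1 hmul a)⟩

end Restriction

theorem isWAPAlgebra_of_closed_subalgebra_general (A : Type*) [NonUnitalNormedRing A] [NormedSpace ℂ A] [IsScalarTower ℂ A A] [SMulCommClass ℂ A A]
    (hA : IsWAPAlgebra A (ContinuousLinearMap.mul ℂ A))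
    (S : NonUnitalSubalgebra ℂ A) :
    IsWAPAlgebra S (ContinuousLinearMap.mul ℂ S) :=
  hA.of_isometry (φ := S.toSubmodule.subtypeL) (fun _ => rfl) (fun _ _ => rfl)

/-- A norm-closed subalgebra of a WAP-algebra is a WAP-algebra. -/
theorem isWAPAlgebra_of_closed_subalgebra (A : Type*) [NonUnitalNormedRing A] [NormedSpace ℂ A] [IsScalarTower ℂ A A] [SMulCommClass ℂ A A] [CompleteSpace A]
    (hA : IsWAPAlgebra A (ContinuousLinearMap.mul ℂ A))
    (S : NonUnitalSubalgebra ℂ A) (hS : IsClosed (S : Set A)) :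
    IsWAPAlgebra S (ContinuousLinearMap.mul ℂ S) :=
  isWAPAlgebra_of_closed_subalgebra_general A hA S
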